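/- Let x : [0,1] → ℝ be continuous such that for every 0 ≤ c < d ≤ 1 there exist partitions (π̂_n) of [c,d] with ⟨x⟩^{π̂_n}_{(c,d]} → ∞. Let a : [0,1] → [0,∞) be any increasing function with a(0) = 0. Then there exist refining partitions (π_n) of [0,1], each containing the dyadics of order n, such that ⟨x⟩^{π_n}_t → a(t) for all t ∈ [0,1]; the convergence is uniform if a is continuous. -/

import Mathlib

open Filter Set

/-- A finite partition of `[c,d]`. -/
def IsPartitionOf (π : ℕ → ℝ) (c d : ℝ) : Prop :=
  π 0 = c ∧ Monotone π ∧ ∃ N, ∀ k ≥ N, π k = d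

/-- A finite partition of `[0,1]`. -/
def IsPartition01 (π : ℕ → ℝ) : Prop := IsPartitionOf π 0 1

/-- The quadratic variation of `x` along a finite partition `π`. -/
noncomputable def qvFull (x : ℝ → ℝ) (π : ℕ → ℝ) : ℝ :=
  ∑' i : ℕ, (x (π (i + 1)) - x (π i)) ^ 2

/-- The stopped discrete quadratic variation `⟨x⟩^π_t`. -/
noncomputable def qvAt (x : ℝ → ℝ) (π : ℕ → ℝ) (t : ℝ) : ℝ :=
  ∑' j : ℕ, (x (min (π (j + 1)) t) - x (min (π j) t)) ^ 2

/-!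
Enumerate the countably many discontinuities of `a` as `s₀, s₁, …` and let `Mₙ` consist of the
dyadics of order `n` and `s₀, …, sₙ₋₁`. Stage `n` refines stage `n - 1` through all of `Mₙ` so that
the stopped quadratic variation at every `p ∈ Mₙ` lies in `[a p, a p + 2⁻ⁿ]`. On each gap `[u, w]`
between consecutive nodes we take a partition of `[u, w]` with huge quadratic variation (which
exists by hypothesis), stop it when it has collected exactly `a w - a u` (the stopped variation is
continuous in the stopping time), and finish with a partition of negligible quadratic variation
(cut `[u, w]` where `x` crosses equally spaced levels between `x u` and `x w`).

At any other time `t`, the stopped variation is squeezed between `a` at the neighbouring dyadics,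
up to the single increment of `x` cut by `t`. Continuity of `x`, together with continuity of `a`
at `t` (or `t ∈ Mₙ` for large `n`), gives the convergence, uniformly when `a` is continuous.
-/

open Topology

noncomputable def pathQV (f : ℝ → ℝ) : ℝ → List ℝ → ℝ
  | _, [] => 0
  | u, w :: l => (f w - f u) ^ 2 + pathQV f w l

def IsPartitionList (u : ℝ) (l : List ℝ) (w : ℝ) : Prop :=
  (u :: l).Pairwise (· ≤ ·) ∧ l.getLastD u = w

def HasUnboundedQV (x : ℝ → ℝ) (c d : ℝ) : Prop :=
  ∃ phat : ℕ → ℕ → ℝ, (∀ n, IsPartitionOf (phat n) c d) ∧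
    Tendsto (fun n => qvFull x (phat n)) atTop atTop

-- `pathQV (fun y => x (min y p)) 0 l` is `⟨x⟩_p` along the partition `0 :: l`.
def IsQVApprox (x a : ℝ → ℝ) (F : Finset ℝ) (ε : ℝ) (l : List ℝ) : Prop :=
  IsPartitionList 0 l 1 ∧ (∀ p ∈ F, p ∈ (0 : ℝ) :: l) ∧
    ∀ p ∈ F, a p ≤ pathQV (fun y => x (min y p)) 0 l ∧ pathQV (fun y => x (min y p)) 0 l ≤ a p + ε

def IsBracketed (x a : ℝ → ℝ) (S : Set ℝ) (r t q : ℝ) : Prop :=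
  ∃ pl ∈ S, ∃ qr ∈ S, ∃ p' ∈ Icc pl t, t ≤ qr ∧ qr - pl ≤ r ∧
    a pl ≤ q ∧ q ≤ a qr + r + (x t - x p') ^ 2

section pathQV

variable (f : ℝ → ℝ)

@[simp] lemma pathQV_nil (u : ℝ) : pathQV f u [] = 0 := rfl

@[simp] lemma pathQV_cons (u w : ℝ) (l : List ℝ) :
    pathQV f u (w :: l) = (f w - f u) ^ 2 + pathQV f w l := rfl

lemma pathQV_nonneg : ∀ (u : ℝ) (l : List ℝ), 0 ≤ pathQV f u l
  | _, [] => le_rfl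
  | _, _ :: l => add_nonneg (sq_nonneg _) (pathQV_nonneg _ l)

lemma pathQV_append : ∀ (u : ℝ) (l₁ l₂ : List ℝ),
    pathQV f u (l₁ ++ l₂) = pathQV f u l₁ + pathQV f (l₁.getLastD u) l₂
  | _, [], _ => by simp
  | _, w :: l₁, l₂ => by
    rw [List.cons_append, pathQV_cons, pathQV_cons, pathQV_append w l₁, List.getLastD_cons,
      add_assoc]

lemma pathQV_map (φ : ℝ → ℝ) : ∀ (u : ℝ) (l : List ℝ),
    pathQV f (φ u) (l.map φ) = pathQV (f ∘ φ) u l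
  | _, [] => rfl
  | _, w :: l => by simp [pathQV_map φ w l]

lemma pathQV_range_map : ∀ (p : ℕ → ℝ) (N : ℕ),
    pathQV f (p 0) ((List.range N).map fun i => p (i + 1)) =
      ∑ i ∈ Finset.range N, (f (p (i + 1)) - f (p i)) ^ 2
  | _, 0 => rfl
  | p, N + 1 => by
    rw [List.range_succ_eq_map, Finset.sum_range_succ']
    simpa [Function.comp_def, add_comm] using pathQV_range_map (fun i => p (i + 1)) N

variable {f}

lemma pathQV_congr {g : ℝ → ℝ} : ∀ {u : ℝ} {l : List ℝ}, (∀ y ∈ u :: l, f y = g y) →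
    pathQV f u l = pathQV g u l
  | _, [], _ => rfl
  | u, w :: l, h => by
    simp only [pathQV_cons, h u (by simp), h w (by simp),
      pathQV_congr (u := w) (l := l) fun y hy => h y (List.mem_cons_of_mem _ hy)]

lemma pathQV_eq_zero_of_forall_eq : ∀ {u : ℝ} {l : List ℝ}, (∀ y ∈ l, f y = f u) →
    pathQV f u l = 0
  | _, [], _ => rfl
  | u, w :: l, h => by
    rw [pathQV_cons, h w (by simp), pathQV_eq_zero_of_forall_eq fun y hy => ?_]
    · ring
    · rw [h y (List.mem_cons_of_mem _ hy), h w (by simp)]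

end pathQV

lemma qvFull_eq_pathQV (f : ℝ → ℝ) (p : ℕ → ℝ) (N : ℕ) (hp : ∀ k ≥ N, p k = p N) :
    qvFull f p = pathQV f (p 0) ((List.range N).map fun i => p (i + 1)) := by
  rw [pathQV_range_map, qvFull, tsum_eq_sum]
  intro i hi
  rw [Finset.mem_range, not_lt] at hi
  rw [hp i hi, hp (i + 1) (by omega), sub_self, sq, mul_zero]

namespace List

variable {α : Type*}

theorem range_getD (l : List α) (d : α) : Set.range (l.getD · d) = insert d {x | x ∈ l} := by
  ext x
  simp only [Set.mem_range, Set.mem_insert_iff, Set.mem_ofPred_eq, getD_eq_getElem?_getD,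
    getD_getElem?, mem_iff_getElem]
  constructor
  · rintro ⟨i, rfl⟩
    split_ifs with h
    exacts [.inr ⟨i, h, rfl⟩, .inl rfl]
  · rintro (rfl | ⟨i, h, rfl⟩)
    · exact ⟨l.length, by simp⟩
    · exact ⟨i, by simp [h]⟩

theorem getD_cons_length (d : α) : ∀ (u : α) (l : List α), (u :: l).getD l.length d = l.getLastD u
  | _, [] => rfl
  | _, v :: l => by rw [length_cons, getD_cons_succ, getD_cons_length d v l, getLastD_cons]

theorem Pairwise.head_le [Preorder α] {u y : α} {l : List α} (hl : (u :: l).Pairwise (· ≤ ·))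
    (hy : y ∈ u :: l) : u ≤ y := by
  rcases mem_cons.1 hy with rfl | hy
  exacts [le_rfl, rel_of_pairwise_cons hl hy]

end List

namespace IsPartitionList

variable {u v w : ℝ} {l l₁ l₂ : List ℝ}

lemma singleton (u : ℝ) : IsPartitionList u [] u := ⟨List.pairwise_singleton _ _, rfl⟩

lemma mem_Icc (h : IsPartitionList u l w) {y : ℝ} (hy : y ∈ u :: l) : y ∈ Icc u w := by
  obtain ⟨hs, rfl⟩ := h
  refine ⟨hs.head_le hy, ?_⟩
  rcases List.eq_nil_or_concat l with rfl | ⟨l', b, rfl⟩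
  · simp_all
  · rw [List.concat_eq_append, ← List.cons_append, List.pairwise_append] at hs
    rw [List.concat_eq_append, ← List.cons_append, List.mem_append] at hy
    rw [List.concat_eq_append, List.getLastD_concat]
    rcases hy with hy | hy
    · exact hs.2.2 y hy b (by simp)
    · simp_all

lemma le (h : IsPartitionList u l w) : u ≤ w := (h.mem_Icc List.mem_cons_self).2

lemma append (h₁ : IsPartitionList u l₁ v) (h₂ : IsPartitionList v l₂ w) :
    IsPartitionList u (l₁ ++ l₂) w := by
  refine ⟨?_, by simp [List.getLast?_append, ← h₂.2, ← h₁.2]⟩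
  rw [← List.cons_append, List.pairwise_append]
  refine ⟨h₁.1, (List.pairwise_cons.1 h₂.1).2, fun a ha b hb => ?_⟩
  exact (h₁.mem_Icc ha).2.trans (h₂.mem_Icc (List.mem_cons_of_mem _ hb)).1

lemma cons (hu : u ≤ v) (h : IsPartitionList v l w) : IsPartitionList u (v :: l) w :=
  (show IsPartitionList u [v] v from ⟨by simpa using hu, rfl⟩).append h

lemma map_min (h : IsPartitionList u l w) {s : ℝ} (hs : u ≤ s) :
    IsPartitionList u (l.map (min · s)) (min w s) := by
  have hu : min u s = u := min_eq_left hs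
  refine ⟨?_, ?_⟩
  · have := List.pairwise_map.2 (h.1.imp fun hab => min_le_min_right s hab)
    rwa [List.map_cons, hu] at this
  · rw [← h.2, ← List.getLastD_map (f := (min · s)), hu]

lemma getD_of_length_le (h : IsPartitionList u l w) {k : ℕ} (hk : l.length ≤ k) :
    (u :: l).getD k w = w := by
  rcases hk.eq_or_lt with rfl | hk
  · exact (List.getD_cons_length w u l).trans h.2
  · exact List.getD_eq_default _ _ (by simpa using hk)

lemma range_getD (h : IsPartitionList u l w) :
    range (fun i => (u :: l).getD i w) = {y | y ∈ u :: l} := by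
  rw [List.range_getD, insert_eq_of_mem (h.2 ▸ List.getLastD_mem_cons)]

lemma isPartitionOf (h : IsPartitionList u l w) :
    IsPartitionOf (fun i => (u :: l).getD i w) u w := by
  refine ⟨rfl, monotone_nat_of_le_succ fun i => ?_, l.length, fun k => h.getD_of_length_le⟩
  rcases lt_or_ge (i + 1) (u :: l).length with hi | hi
  · rw [List.getD_eq_getElem _ _ hi, List.getD_eq_getElem _ _ (by omega)]
    exact List.pairwise_iff_getElem.1 h.1 _ _ _ _ (lt_add_one i)
  · rw [List.getD_eq_default _ _ hi]
    exact (h.mem_Icc (h.range_getD ▸ mem_range_self i : _ ∈ {y | y ∈ u :: l})).2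

lemma qvFull_getD (h : IsPartitionList u l w) (f : ℝ → ℝ) :
    qvFull f (fun i => (u :: l).getD i w) = pathQV f u l := by
  rw [qvFull_eq_pathQV f _ l.length fun k hk => by
    rw [h.getD_of_length_le hk, h.getD_of_length_le le_rfl]]
  congr 1
  refine List.ext_getElem (by simp) fun i h₁ h₂ => ?_
  simp [List.getD_eq_getElem?_getD, h₂]

end IsPartitionList

lemma isPartitionList_range_map {p : ℕ → ℝ} (hp : Monotone p) (N : ℕ) :
    IsPartitionList (p 0) ((List.range N).map fun i => p (i + 1)) (p N) := by
  refine ⟨?_, ?_⟩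
  · have := List.pairwise_map.2 ((List.pairwise_le_range (n := N + 1)).imp fun hij => hp hij)
    rwa [List.range_succ_eq_map, List.map_cons, List.map_map] at this
  · cases N with
    | zero => rfl
    | succ N => rw [List.range_succ, List.map_append, List.map_singleton, List.getLastD_concat]

section Stopping

variable (x : ℝ → ℝ) {u : ℝ} {l : List ℝ}

lemma pathQV_min_eq_zero (hl : (u :: l).Pairwise (· ≤ ·)) {s : ℝ} (hs : s ≤ u) :
    pathQV (fun y => x (min y s)) u l = 0 :=
  pathQV_eq_zero_of_forall_eq fun y hy => by
    rw [min_eq_right (hs.trans (List.rel_of_pairwise_cons hl hy)), min_eq_right hs]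

lemma IsPartitionList.pathQV_min_of_le {w t : ℝ} (h : IsPartitionList u l w) (hwt : w ≤ t) :
    pathQV (fun y => x (min y t)) u l = pathQV x u l :=
  pathQV_congr fun y hy => by rw [min_eq_left ((h.mem_Icc hy).2.trans hwt)]

lemma pathQV_min_le_of_mem (hl : (u :: l).Pairwise (· ≤ ·)) {p t : ℝ} (hp : p ∈ u :: l)
    (hpt : p ≤ t) : pathQV (fun y => x (min y p)) u l ≤ pathQV (fun y => x (min y t)) u l := by
  induction l generalizing u with
  | nil => rfl
  | cons w r ih =>
    have huw : u ≤ w := hl.head_le (by simp)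
    by_cases hwp : w ≤ p
    · have hp' : p ∈ w :: r := by
        rcases List.mem_cons.1 hp with rfl | hp
        exacts [hwp.antisymm huw ▸ List.mem_cons_self, hp]
      simp only [pathQV_cons, min_eq_left hwp, min_eq_left (huw.trans hwp),
        min_eq_left (hwp.trans hpt), min_eq_left ((huw.trans hwp).trans hpt)]
      exact add_le_add_right (ih (List.pairwise_cons.1 hl).2 hp') _
    · obtain rfl : p = u := (List.mem_cons.1 hp).resolve_right fun hp =>
        hwp ((List.pairwise_cons.1 hl).2.head_le hp)
      rw [pathQV_min_eq_zero x hl le_rfl]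
      exact pathQV_nonneg _ _ _

-- The only increment that stopping at `t` can cut is the one leaving the last point `p' ≤ t`.
lemma exists_pathQV_min_le (hl : (u :: l).Pairwise (· ≤ ·)) {p t q : ℝ} (hp : p ∈ u :: l)
    (hpt : p ≤ t) (htq : t ≤ q) : ∃ p' ∈ Icc p t,
      pathQV (fun y => x (min y t)) u l ≤ pathQV (fun y => x (min y q)) u l + (x t - x p') ^ 2 := by
  induction l generalizing u p with
  | nil => exact ⟨p, ⟨le_rfl, hpt⟩, by simpa using sq_nonneg _⟩
  | cons w r ih =>
    have huw : u ≤ w := hl.head_le (by simp)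
    have hr := (List.pairwise_cons.1 hl).2
    by_cases hwt : w ≤ t
    · obtain ⟨p₀, hp₀, hpp₀, hp₀t⟩ : ∃ p₀ ∈ w :: r, p ≤ p₀ ∧ p₀ ≤ t := by
        rcases List.mem_cons.1 hp with rfl | hp
        exacts [⟨w, List.mem_cons_self, huw, hwt⟩, ⟨p, hp, le_rfl, hpt⟩]
      obtain ⟨p', hp', hle⟩ := ih hr hp₀ hp₀t
      refine ⟨p', ⟨hpp₀.trans hp'.1, hp'.2⟩, ?_⟩
      simp only [pathQV_cons, min_eq_left hwt, min_eq_left (huw.trans hwt),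
        min_eq_left (hwt.trans htq), min_eq_left ((huw.trans hwt).trans htq)]
      linarith
    · rw [not_le] at hwt
      obtain rfl : p = u := (List.mem_cons.1 hp).resolve_right fun hp =>
        hwt.not_ge ((hr.head_le hp).trans hpt)
      refine ⟨p, ⟨le_rfl, hpt⟩, ?_⟩
      rw [pathQV_cons, pathQV_min_eq_zero x hr hwt.le, min_eq_right hwt.le, min_eq_left hpt]
      linarith [pathQV_nonneg (fun y => x (min y q)) p (w :: r)]

lemma continuousOn_pathQV_min {c d : ℝ} (hx : ContinuousOn x (Icc c d))
    (hl : ∀ y ∈ u :: l, y ∈ Icc c d) :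
    ContinuousOn (fun s => pathQV (fun y => x (min y s)) u l) (Icc c d) := by
  have hmin : ∀ y ∈ Icc c d, ContinuousOn (fun s => x (min y s)) (Icc c d) := fun y hy =>
    hx.comp (continuous_const.min continuous_id).continuousOn
      fun s hs => ⟨le_min hy.1 hs.1, (min_le_left _ _).trans hy.2⟩
  induction l generalizing u with
  | nil => exact continuousOn_const
  | cons w r ih =>
    exact (((hmin w (hl w (by simp))).sub (hmin u (hl u (by simp)))).pow 2).add
      (ih fun y hy => hl y (List.mem_cons_of_mem _ hy))

end Stopping

section Existence

variable {x : ℝ → ℝ}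

-- Cut `[u, w]` where `x` has covered `1 / (n + 2)` of its increment, and recurse on the rest.
lemma exists_isPartitionList_pathQV_eq {u w : ℝ} (hx : ContinuousOn x (Icc u w)) (huw : u ≤ w)
    (n : ℕ) : ∃ l, IsPartitionList u l w ∧ pathQV x u l = (x w - x u) ^ 2 / (n + 1) := by
  induction n generalizing u with
  | zero => exact ⟨[w], ⟨by simpa using huw, rfl⟩, by simp⟩
  | succ n ih =>
    set θ : ℝ := 1 / (n + 2)
    have hθ : θ ∈ Icc (0 : ℝ) 1 := ⟨by positivity, by rw [div_le_one (by positivity)]; linarith⟩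
    have hlevel := (convex_uIcc (x u) (x w)).add_smul_sub_mem left_mem_uIcc right_mem_uIcc hθ
    rw [← uIcc_of_le huw] at hx
    obtain ⟨s, hs, hxs⟩ := intermediate_value_uIcc hx hlevel
    rw [uIcc_of_le huw] at hs hx
    obtain ⟨l, hl, hqv⟩ := ih (hx.mono (Icc_subset_Icc_left hs.1)) hs.2
    refine ⟨s :: l, hl.cons hs.1, ?_⟩
    rw [pathQV_cons, hqv, hxs, smul_eq_mul]
    simp only [θ]
    push_cast
    field_simp
    ring

lemma exists_isPartitionList_pathQV_le {u w : ℝ} (hx : ContinuousOn x (Icc u w)) (huw : u ≤ w)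
    {δ : ℝ} (hδ : 0 < δ) : ∃ l, IsPartitionList u l w ∧ pathQV x u l ≤ δ := by
  obtain ⟨n, hn⟩ := exists_nat_gt ((x w - x u) ^ 2 / δ)
  obtain ⟨l, hl, hqv⟩ := exists_isPartitionList_pathQV_eq hx huw n
  refine ⟨l, hl, ?_⟩
  rw [hqv, div_le_iff₀ (by positivity)]
  rw [div_lt_iff₀ hδ] at hn
  linarith

-- Stop a partition of large quadratic variation when its stopped variation equals `v`
-- (intermediate value theorem in the stopping time), then finish with a negligible one.
lemma exists_isPartitionList_pathQV_mem {u w : ℝ} (hx : ContinuousOn x (Icc u w))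
    (hbig : HasUnboundedQV x u w) {v δ : ℝ} (hv : 0 ≤ v) (hδ : 0 < δ) :
    ∃ l, IsPartitionList u l w ∧ v ≤ pathQV x u l ∧ pathQV x u l ≤ v + δ := by
  obtain ⟨phat, hpart, hlim⟩ := hbig
  obtain ⟨m, hm⟩ := (hlim.eventually_ge_atTop v).exists
  obtain ⟨hp0, hmono, N, hN⟩ := hpart m
  set L := (List.range N).map fun i => phat m (i + 1)
  have hL : IsPartitionList u L w := hp0 ▸ hN N le_rfl ▸ isPartitionList_range_map hmono N
  have hqv : qvFull x (phat m) = pathQV x u L :=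
    hp0 ▸ qvFull_eq_pathQV x _ N fun k hk => by rw [hN k hk, hN N le_rfl]
  have hv' : v ∈ Icc (pathQV (fun y => x (min y u)) u L) (pathQV (fun y => x (min y w)) u L) := by
    rw [pathQV_min_eq_zero x hL.1 le_rfl, hL.pathQV_min_of_le x le_rfl, ← hqv]
    exact ⟨hv, hm⟩
  obtain ⟨s, hs, hLs⟩ := intermediate_value_Icc hL.le
    (continuousOn_pathQV_min x hx fun y hy => hL.mem_Icc hy) hv'
  obtain ⟨S, hS, hSδ⟩ :=
    exists_isPartitionList_pathQV_le (hx.mono (Icc_subset_Icc_left hs.1)) hs.2 hδ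
  have hLs' := hL.map_min hs.1
  rw [min_eq_right hs.2] at hLs'
  have hqvs : pathQV x u (L.map (min · s)) = v := by
    have := pathQV_map x (min · s) u L
    rw [min_eq_left hs.1] at this
    exact this.trans hLs
  refine ⟨_, hLs'.append hS, ?_⟩
  rw [pathQV_append, hLs'.2, hqvs]
  exact ⟨le_add_of_nonneg_right (pathQV_nonneg _ _ _), by linarith⟩

end Existence

section Stages

variable {x a : ℝ → ℝ}

lemma exists_isPartitionList_through (hx : ContinuousOn x (Icc 0 1))
    (hbig : ∀ c d : ℝ, 0 ≤ c → c < d → d ≤ 1 → HasUnboundedQV x c d)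
    (ha : MonotoneOn a (Icc 0 1)) {δ : ℝ} (hδ : 0 < δ) (u : ℝ) (ns : List ℝ)
    (hns : (u :: ns).Pairwise (· < ·)) (h01 : ∀ y ∈ u :: ns, y ∈ Icc (0 : ℝ) 1) :
    ∃ l, IsPartitionList u l (ns.getLastD u) ∧ (∀ y ∈ ns, y ∈ l) ∧
      ∀ p ∈ u :: ns, a p - a u ≤ pathQV (fun y => x (min y p)) u l ∧
        pathQV (fun y => x (min y p)) u l ≤ a p - a u + ns.length * δ := by
  induction ns generalizing u with
  | nil => exact ⟨[], .singleton u, by simp, by simp⟩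
  | cons w r ih =>
    have huw : u < w := List.rel_of_pairwise_cons hns List.mem_cons_self
    have hr := (List.pairwise_cons.1 hns).2
    have hu := h01 u List.mem_cons_self
    have hw := h01 w (by simp)
    obtain ⟨l, hl, hlr, hlqv⟩ := ih w hr fun y hy => h01 y (List.mem_cons_of_mem _ hy)
    obtain ⟨S, hS, hSlo, hShi⟩ := exists_isPartitionList_pathQV_mem
      (hx.mono (Icc_subset_Icc hu.1 hw.2)) (hbig u w hu.1 huw hw.2)
      (sub_nonneg.2 (ha hu hw huw.le)) hδ
    have hwS : w ∈ S := (List.mem_cons.1 (hS.2 ▸ List.getLastD_mem_cons)).resolve_left huw.ne'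
    have hSl := hS.append hl
    refine ⟨S ++ l, by rwa [List.getLastD_cons], ?_, fun p hp => ?_⟩
    · intro y hy
      rcases List.mem_cons.1 hy with rfl | hy
      exacts [List.mem_append_left _ hwS, List.mem_append_right _ (hlr y hy)]
    rcases List.mem_cons.1 hp with rfl | hp
    · rw [pathQV_min_eq_zero x hSl.1 le_rfl, sub_self]
      exact ⟨le_rfl, by positivity⟩
    · have hwp : w ≤ p := (hr.imp le_of_lt).head_le hp
      rw [pathQV_append, hS.2, hS.pathQV_min_of_le x hwp, List.length_cons]
      have := hlqv p hp
      push_cast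
      constructor <;> linarith

lemma exists_isQVApprox (hx : ContinuousOn x (Icc 0 1))
    (hbig : ∀ c d : ℝ, 0 ≤ c → c < d → d ≤ 1 → HasUnboundedQV x c d)
    (ha : MonotoneOn a (Icc 0 1)) (ha0 : a 0 = 0) {F : Finset ℝ}
    (hF : ∀ y ∈ F, y ∈ Icc (0 : ℝ) 1) (h1F : 1 ∈ F) {ε : ℝ} (hε : 0 < ε) :
    ∃ l, IsQVApprox x a F ε l := by
  set ns := (F.filter (0 < ·)).sort
  have hmem : ∀ {y}, y ∈ ns ↔ y ∈ F ∧ 0 < y := by simp [ns]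
  have hF' : ∀ y ∈ F, y ∈ (0 : ℝ) :: ns := fun y hy =>
    (hF y hy).1.eq_or_lt.elim (fun h => h ▸ List.mem_cons_self)
      fun h => List.mem_cons_of_mem _ (hmem.2 ⟨hy, h⟩)
  have h01 : ∀ y ∈ (0 : ℝ) :: ns, y ∈ Icc (0 : ℝ) 1 := by
    simp only [List.mem_cons, forall_eq_or_imp, hmem]
    exact ⟨⟨le_rfl, zero_le_one⟩, fun y hy => hF y hy.1⟩
  have hlen : (ns.length : ℝ) ≠ 0 := by
    simpa [List.length_eq_zero_iff] using List.ne_nil_of_mem (hmem.2 ⟨h1F, one_pos⟩)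
  obtain ⟨l, hl, hnsl, hqv⟩ := exists_isPartitionList_through hx hbig ha
    (div_pos hε (lt_of_le_of_ne (Nat.cast_nonneg _) hlen.symm)) 0 ns
    (List.pairwise_cons.2 ⟨fun y hy => (hmem.1 hy).2, (Finset.sortedLT_sort _).pairwise⟩) h01
  have hlast : ns.getLastD 0 = 1 := le_antisymm (h01 _ List.getLastD_mem_cons).2
    (hl.mem_Icc (List.mem_cons_of_mem _ (hnsl 1 (hmem.2 ⟨h1F, one_pos⟩)))).2
  rw [hlast] at hl
  refine ⟨l, hl, fun y hy => ?_, fun p hp => ?_⟩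
  · rcases List.mem_cons.1 (hF' y hy) with rfl | hy
    exacts [List.mem_cons_self, List.mem_cons_of_mem _ (hnsl y hy)]
  · have := hqv p (hF' p hp)
    rwa [ha0, sub_zero, mul_div_cancel₀ _ hlen] at this

lemma exists_seq_of_forall_exists {α : Type*} (P : ℕ → α → Prop) (R : α → α → Prop)
    (h0 : ∃ b, P 0 b) (h : ∀ n b, P n b → ∃ c, P (n + 1) c ∧ R b c) :
    ∃ f : ℕ → α, ∀ n, P n (f n) ∧ R (f n) (f (n + 1)) := by
  choose step hstep using fun n (b : {b // P n b}) => h n b.1 b.2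
  let g : (n : ℕ) → {b // P n b} :=
    fun n => Nat.rec ⟨h0.choose, h0.choose_spec⟩ (fun n b => ⟨step n b, (hstep n b).1⟩) n
  exact ⟨fun n => (g n).1, fun n => ⟨(g n).2, (hstep n (g n)).2⟩⟩

lemma exists_refining_isQVApprox (hx : ContinuousOn x (Icc 0 1))
    (hbig : ∀ c d : ℝ, 0 ≤ c → c < d → d ≤ 1 → HasUnboundedQV x c d)
    (ha : MonotoneOn a (Icc 0 1)) (ha0 : a 0 = 0) (M : ℕ → Finset ℝ)
    (hM : ∀ n, ∀ y ∈ M n, y ∈ Icc (0 : ℝ) 1) (h1M : ∀ n, 1 ∈ M n) {ε : ℕ → ℝ}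
    (hε : ∀ n, 0 < ε n) :
    ∃ l : ℕ → List ℝ, ∀ n, IsQVApprox x a (M n) (ε n) (l n) ∧
      ∀ y ∈ (0 : ℝ) :: l n, y ∈ (0 : ℝ) :: l (n + 1) := by
  refine exists_seq_of_forall_exists (fun n l => IsQVApprox x a (M n) (ε n) l)
    (fun l l' => ∀ y ∈ (0 : ℝ) :: l, y ∈ 0 :: l')
    (exists_isQVApprox hx hbig ha ha0 (hM 0) (h1M 0) (hε 0)) fun n l ⟨hl, _⟩ => ?_
  obtain ⟨l', hl', hFl', hqv'⟩ := exists_isQVApprox hx hbig ha ha0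
    (F := M (n + 1) ∪ ((0 : ℝ) :: l).toFinset) (by
      simp only [Finset.mem_union, List.mem_toFinset]
      exact fun y hy => hy.elim (hM _ y) hl.mem_Icc)
    (Finset.mem_union_left _ (h1M _)) (hε (n + 1))
  exact ⟨l', ⟨hl', fun y hy => hFl' y (Finset.mem_union_left _ hy),
    fun p hp => hqv' p (Finset.mem_union_left _ hp)⟩,
    fun y hy => hFl' y (Finset.mem_union_right _ (List.mem_toFinset.2 hy))⟩

end Stages

section Convergence

variable {x a : ℝ → ℝ}

lemma exists_dyadic_bracket (n : ℕ) {t : ℝ} (ht : t ∈ Icc (0 : ℝ) 1) :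
    ∃ k₁ k₂ : ℕ, k₁ ≤ 2 ^ n ∧ k₂ ≤ 2 ^ n ∧ (k₁ : ℝ) / 2 ^ n ≤ t ∧ t ≤ (k₂ : ℝ) / 2 ^ n ∧
      (k₂ : ℝ) / 2 ^ n - k₁ / 2 ^ n ≤ (2 ^ n)⁻¹ := by
  have h2n : (0 : ℝ) < 2 ^ n := by positivity
  have ht2n : t * 2 ^ n ≤ 2 ^ n := mul_le_of_le_one_left h2n.le ht.2
  have ht0 : 0 ≤ t * 2 ^ n := mul_nonneg ht.1 h2n.le
  refine ⟨⌊t * 2 ^ n⌋₊, ⌈t * 2 ^ n⌉₊, ?_, ?_, ?_, ?_, ?_⟩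
  · exact_mod_cast (Nat.floor_le ht0).trans ht2n
  · exact Nat.ceil_le.2 (by exact_mod_cast ht2n)
  · rw [div_le_iff₀ h2n]; exact Nat.floor_le ht0
  · rw [le_div_iff₀ h2n]; exact Nat.le_ceil _
  · rw [← sub_div, ← one_div, div_le_div_iff_of_pos_right h2n, sub_le_iff_le_add']
    exact_mod_cast Nat.ceil_le_floor_add_one _

lemma IsQVApprox.isBracketed {F : Finset ℝ} {l : List ℝ} {n : ℕ}
    (h : IsQVApprox x a F (2 ^ n)⁻¹ l) (hF : ∀ k : ℕ, k ≤ 2 ^ n → (k : ℝ) / 2 ^ n ∈ F)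
    {t : ℝ} (ht : t ∈ Icc (0 : ℝ) 1) :
    IsBracketed x a (Icc 0 1) (2 ^ n)⁻¹ t (pathQV (fun y => x (min y t)) 0 l) := by
  obtain ⟨hl, hFl, hqv⟩ := h
  obtain ⟨k₁, k₂, hk₁, hk₂, h₁, h₂, hmesh⟩ := exists_dyadic_bracket n ht
  have hpl := hF k₁ hk₁
  have hqr := hF k₂ hk₂
  obtain ⟨p', hp', hup⟩ := exists_pathQV_min_le x hl.1 (hFl _ hpl) h₁ h₂
  refine ⟨_, hl.mem_Icc (hFl _ hpl), _, hl.mem_Icc (hFl _ hqr), p', hp', h₂, hmesh, ?_, ?_⟩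
  · exact (hqv _ hpl).1.trans (pathQV_min_le_of_mem x hl.1 (hFl _ hpl) h₁)
  · linarith [(hqv _ hqr).2]

lemma tendsto_pathQV_min_of_isQVApprox {M : ℕ → Finset ℝ} {ε : ℕ → ℝ} {l : ℕ → List ℝ}
    (hl : ∀ n, IsQVApprox x a (M n) (ε n) (l n)) (hε : Tendsto ε atTop (𝓝 0)) {p : ℝ}
    (hp : ∀ᶠ n in atTop, p ∈ M n) :
    Tendsto (fun n => pathQV (fun y => x (min y p)) 0 (l n)) atTop (𝓝 (a p)) :=
  tendsto_of_tendsto_of_tendsto_of_le_of_le' tendsto_const_nhds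
    (by simpa using tendsto_const_nhds.add hε)
    (hp.mono fun n hn => ((hl n).2.2 p hn).1) (hp.mono fun n hn => ((hl n).2.2 p hn).2)

variable {r : ℕ → ℝ} {Q : ℕ → ℝ → ℝ} {S T : Set ℝ}

lemma tendstoUniformlyOn_of_isBracketed (hS : S.OrdConnected) (hTS : T ⊆ S)
    (hx : UniformContinuousOn x S)
    (ha : ∀ ε > 0, ∃ δ > 0, ∀ t ∈ T, ∀ u ∈ S, dist u t < δ → dist (a u) (a t) < ε)
    (hr : Tendsto r atTop (𝓝 0)) (hQ : ∀ n, ∀ t ∈ T, IsBracketed x a S (r n) t (Q n t)) :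
    TendstoUniformlyOn Q a atTop T := by
  rw [Metric.tendstoUniformlyOn_iff]
  intro ε hε
  obtain ⟨δa, hδa, hδa'⟩ := ha (ε / 3) (by positivity)
  obtain ⟨δx, hδx, hδx'⟩ := Metric.uniformContinuousOn_iff.1 hx √(ε / 3) (by positivity)
  filter_upwards [hr.eventually (gt_mem_nhds (lt_min (lt_min hδa hδx) (by positivity : 0 < ε / 3)))]
    with n hn t ht
  obtain ⟨hrδ, hrε⟩ := lt_min_iff.1 hn
  obtain ⟨pl, hpl, qr, hqr, p', hp', htqr, hmesh, hlo, hhi⟩ := hQ n t ht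
  have ht' : t ∈ Icc pl qr := ⟨hp'.1.trans hp'.2, htqr⟩
  have hclose : ∀ y ∈ Icc pl qr, dist y t < δa ∧ dist y t < δx := fun y hy =>
    lt_min_iff.1 ((Real.dist_le_of_mem_Icc hy ht').trans_lt (hmesh.trans_lt hrδ))
  have hapl := hδa' t ht pl hpl (hclose pl ⟨le_rfl, ht'.1.trans ht'.2⟩).1
  have haqr := hδa' t ht qr hqr (hclose qr ⟨ht'.1.trans ht'.2, le_rfl⟩).1
  have hxp : (x t - x p') ^ 2 < ε / 3 := by
    have := hδx' t (hTS ht) p' (hS.out hpl (hTS ht) hp')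
      (dist_comm p' t ▸ (hclose p' ⟨hp'.1, hp'.2.trans htqr⟩).2)
    rwa [Real.dist_eq, Real.lt_sqrt (abs_nonneg _), sq_abs] at this
  rw [Real.dist_eq, abs_lt] at hapl haqr ⊢
  constructor <;> linarith

lemma UniformContinuousOn.tendstoUniformlyOn_of_isBracketed (ha : UniformContinuousOn a S)
    (hS : S.OrdConnected) (hx : UniformContinuousOn x S) (hr : Tendsto r atTop (𝓝 0))
    (hQ : ∀ n, ∀ t ∈ S, IsBracketed x a S (r n) t (Q n t)) :
    TendstoUniformlyOn Q a atTop S := by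
  refine _root_.tendstoUniformlyOn_of_isBracketed hS subset_rfl hx (fun ε hε => ?_) hr hQ
  obtain ⟨δ, hδ, hδ'⟩ := Metric.uniformContinuousOn_iff.1 ha ε hε
  exact ⟨δ, hδ, fun t ht u hu => hδ' u hu t ht⟩

lemma ContinuousWithinAt.tendsto_of_isBracketed {t : ℝ} (ha : ContinuousWithinAt a S t)
    (hS : S.OrdConnected) (ht : t ∈ S) (hx : UniformContinuousOn x S)
    (hr : Tendsto r atTop (𝓝 0)) (hQ : ∀ n, IsBracketed x a S (r n) t (Q n t)) :
    Tendsto (fun n => Q n t) atTop (𝓝 (a t)) := by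
  refine tendstoUniformlyOn_singleton_iff_tendsto.1 (tendstoUniformlyOn_of_isBracketed hS
    (singleton_subset_iff.2 ht) hx (fun ε hε => ?_) hr fun n t' ht' => ?_)
  · obtain ⟨δ, hδ, hδ'⟩ := Metric.continuousWithinAt_iff.1 ha ε hε
    exact ⟨δ, hδ, fun t' ht' u hu => mem_singleton_iff.1 ht' ▸ hδ' hu⟩
  · exact mem_singleton_iff.1 ht' ▸ hQ n

end Convergence

lemma MonotoneOn.exists_range_superset_not_continuousWithinAt {a : ℝ → ℝ} {S : Set ℝ}
    (ha : MonotoneOn a S) (hS : S.Nonempty) :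
    ∃ s : ℕ → ℝ, range s ⊆ S ∧ {t ∈ S | ¬ContinuousWithinAt a S t} ⊆ range s := by
  obtain ⟨t₀, ht₀⟩ := hS
  obtain ⟨s, hs⟩ := (ha.countable_not_continuousWithinAt.insert t₀).exists_eq_range
    (insert_nonempty _ _)
  exact ⟨s, hs ▸ insert_subset ht₀ (sep_subset _ _), hs ▸ subset_insert _ _⟩

noncomputable def stagePoints (s : ℕ → ℝ) (n : ℕ) : Finset ℝ :=
  (Finset.range (2 ^ n + 1)).image (fun k : ℕ => (k : ℝ) / 2 ^ n) ∪ (Finset.range n).image s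

lemma dyadic_mem_stagePoints {s : ℕ → ℝ} {n k : ℕ} (hk : k ≤ 2 ^ n) :
    (k : ℝ) / 2 ^ n ∈ stagePoints s n :=
  Finset.mem_union_left _ (Finset.mem_image_of_mem _ (Finset.mem_range_succ_iff.2 hk))

lemma mem_stagePoints_of_lt {s : ℕ → ℝ} {n k : ℕ} (hk : k < n) : s k ∈ stagePoints s n :=
  Finset.mem_union_right _ (Finset.mem_image_of_mem _ (Finset.mem_range.2 hk))

lemma one_mem_stagePoints (s : ℕ → ℝ) (n : ℕ) : (1 : ℝ) ∈ stagePoints s n := by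
  simpa using dyadic_mem_stagePoints (s := s) (le_refl (2 ^ n))

lemma stagePoints_subset_Icc {s : ℕ → ℝ} (hs : range s ⊆ Icc 0 1) (n : ℕ) :
    ∀ y ∈ stagePoints s n, y ∈ Icc (0 : ℝ) 1 := by
  intro y hy
  simp only [stagePoints, Finset.mem_union, Finset.mem_image, Finset.mem_range] at hy
  rcases hy with ⟨k, hk, rfl⟩ | ⟨k, -, rfl⟩
  · exact ⟨by positivity, div_le_one_of_le₀ (by exact_mod_cast Nat.lt_succ_iff.1 hk) (by positivity)⟩
  · exact hs (mem_range_self k)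

theorem exists_partitions_qv_tendsto_arbitrary_general
    (x a : ℝ → ℝ)
    (hx : ContinuousOn x (Set.Icc 0 1))
    (hbig : ∀ c d : ℝ, 0 ≤ c → c < d → d ≤ 1 →
      ∃ phat : ℕ → ℕ → ℝ, (∀ n, IsPartitionOf (phat n) c d) ∧
        Tendsto (fun n => qvFull x (phat n)) atTop atTop)
    (ha : MonotoneOn a (Set.Icc 0 1))
    (ha0 : a 0 = 0) :
    ∃ π : ℕ → ℕ → ℝ,
      (∀ n, IsPartition01 (π n)) ∧
      (∀ n, Set.range (π n) ⊆ Set.range (π (n + 1))) ∧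
      (∀ n (k : ℕ), k ≤ 2 ^ n → ((k : ℝ) / 2 ^ n) ∈ Set.range (π n)) ∧
      (∀ t ∈ Set.Icc (0 : ℝ) 1,
        Tendsto (fun n => qvAt x (π n) t) atTop (nhds (a t))) ∧
      (ContinuousOn a (Set.Icc 0 1) →
        TendstoUniformlyOn (fun n => qvAt x (π n)) a atTop (Set.Icc 0 1)) := by
  obtain ⟨s, hs01, hsD⟩ :=
    ha.exists_range_superset_not_continuousWithinAt ⟨0, left_mem_Icc.2 zero_le_one⟩
  obtain ⟨l, hl⟩ := exists_refining_isQVApprox hx hbig ha ha0 (stagePoints s)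
    (stagePoints_subset_Icc hs01) (one_mem_stagePoints s) (ε := fun n => (2 ^ n)⁻¹)
    fun n => by positivity
  have hqv : ∀ n t, qvAt x (fun i => (0 :: l n).getD i 1) t =
      pathQV (fun y => x (min y t)) 0 (l n) := fun n t =>
    (hl n).1.1.qvFull_getD (fun y => x (min y t))
  have hQ : ∀ n, ∀ t ∈ Icc (0 : ℝ) 1,
      IsBracketed x a (Icc 0 1) (2 ^ n)⁻¹ t (qvAt x (fun i => (0 :: l n).getD i 1) t) :=
    fun n t ht => hqv n t ▸ (hl n).1.isBracketed (fun _ => dyadic_mem_stagePoints) ht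
  have hr : Tendsto (fun n : ℕ => ((2 : ℝ) ^ n)⁻¹) atTop (𝓝 0) :=
    tendsto_inv_atTop_zero.comp (tendsto_pow_atTop_atTop_of_one_lt one_lt_two)
  have hUCx := isCompact_Icc.uniformContinuousOn_of_continuous hx
  refine ⟨fun n i => (0 :: l n).getD i 1, fun n => (hl n).1.1.isPartitionOf, fun n => ?_,
    fun n k hk => ?_, fun t ht => ?_, fun hac => ?_⟩
  · rw [(hl n).1.1.range_getD, (hl (n + 1)).1.1.range_getD]
    exact (hl n).2
  · rw [(hl n).1.1.range_getD]
    exact (hl n).1.2.1 _ (dyadic_mem_stagePoints hk)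
  · by_cases hc : ContinuousWithinAt a (Icc 0 1) t
    · exact hc.tendsto_of_isBracketed ordConnected_Icc ht hUCx hr fun n => hQ n t ht
    · obtain ⟨k, rfl⟩ := hsD ⟨ht, hc⟩
      simp only [hqv]
      exact tendsto_pathQV_min_of_isQVApprox (fun n => (hl n).1) hr
        ((eventually_gt_atTop k).mono fun _ => mem_stagePoints_of_lt)
  · exact (isCompact_Icc.uniformContinuousOn_of_continuous hac).tendstoUniformlyOn_of_isBracketed
      ordConnected_Icc hUCx hr hQ

/-- If the continuous path `x` has infinite quadratic variation on every subinterval of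
`[0,1]` (along suitable partitions), then for any increasing `a : [0,1] → [0,∞)` with
`a(0)=0` there exist refining partitions `π_n ⊇ {k·2⁻ⁿ}` with `⟨x⟩^{π_n}_t → a(t)` for all
`t ∈ [0,1]`, uniformly if `a` is continuous. -/
theorem exists_partitions_qv_tendsto_arbitrary
    (x a : ℝ → ℝ)
    (hx : ContinuousOn x (Set.Icc 0 1))
    (hbig : ∀ c d : ℝ, 0 ≤ c → c < d → d ≤ 1 →
      ∃ phat : ℕ → ℕ → ℝ, (∀ n, IsPartitionOf (phat n) c d) ∧
        Tendsto (fun n => qvFull x (phat n)) atTop atTop)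
    (ha : MonotoneOn a (Set.Icc 0 1))
    (ha0 : a 0 = 0) (hapos : ∀ t ∈ Set.Icc (0 : ℝ) 1, 0 ≤ a t) :
    ∃ π : ℕ → ℕ → ℝ,
      (∀ n, IsPartition01 (π n)) ∧
      (∀ n, Set.range (π n) ⊆ Set.range (π (n + 1))) ∧
      (∀ n (k : ℕ), k ≤ 2 ^ n → ((k : ℝ) / 2 ^ n) ∈ Set.range (π n)) ∧
      (∀ t ∈ Set.Icc (0 : ℝ) 1,
        Tendsto (fun n => qvAt x (π n) t) atTop (nhds (a t))) ∧
      (ContinuousOn a (Set.Icc 0 1) →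
        TendstoUniformlyOn (fun n => qvAt x (π n)) a atTop (Set.Icc 0 1)) :=
  exists_partitions_qv_tendsto_arbitrary_general x a hx hbig ha ha0
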